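/- Let f(n) denote the number of words in [3]^n avoiding the pattern 123. Then f(0) = 1, f(1) = 3, f(2) = 9, and for every integer n ≥ 3, f(n) = 3·f(n-1) - f(n-3). -/
import Mathlib

/-- The `i`-th letter (1-based value in `{1,…,k}`) of a word `w ∈ [k]^n`,
with value `0` outside the word. -/
def letter {n k : ℕ} (w : Fin n → Fin k) (i : ℕ) : ℕ :=
  if h : i < n then (w ⟨i, h⟩ : ℕ) + 1 else 0

/-- `w` avoids the pattern 123: there is no 0-based index `i` with `i + 2 < n`
such that `w i < w (i+1) < w (i+2)`. -/
def Avoids123 {n k : ℕ} (w : Fin n → Fin k) : Prop :=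
  ∀ i : ℕ, i + 2 < n →
    ¬ (letter w i < letter w (i + 1) ∧ letter w (i + 1) < letter w (i + 2))

/-- The number of words in `[3]^n` avoiding 123. -/
noncomputable def f (n : ℕ) : ℕ := Nat.card {w : Fin n → Fin 3 // Avoids123 w}

instance {n k : ℕ} (w : Fin n → Fin k) : Decidable (Avoids123 w) :=
  decidable_of_iff (∀ i < n, i + 2 < n →
      ¬ (letter w i < letter w (i + 1) ∧ letter w (i + 1) < letter w (i + 2))) <| by
    constructor
    · intro h i hi
      exact h i (by omega) hi
    · intro h i _ hi
      exact h i hi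

lemma letter_pos {n k : ℕ} (w : Fin n → Fin k) {i : ℕ} (h : i < n) : 1 ≤ letter w i := by
  simp [letter, h]

lemma letter_le {n k : ℕ} (w : Fin n → Fin k) (i : ℕ) : letter w i ≤ k := by
  unfold letter
  split
  · have := (w ⟨i, by assumption⟩).isLt; omega
  · omega

lemma letter_init {n k : ℕ} (w : Fin (n + 1) → Fin k) {i : ℕ} (h : i < n) :
    letter (Fin.init w) i = letter w i := by
  simp [letter, Fin.init, h, Nat.lt_succ_of_lt h, Fin.castSucc_mk]

lemma avoids_init {n k : ℕ} {w : Fin (n + 1) → Fin k} (h : Avoids123 w) :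
    Avoids123 (Fin.init w) := by
  intro i hi
  rw [letter_init w (by omega), letter_init w (by omega), letter_init w (by omega)]
  exact h i (by omega)

/-- truncation to the first `n` letters -/
def trunc {n k : ℕ} (w : Fin (n + 3) → Fin k) : Fin n → Fin k :=
  fun i => w (Fin.castLE (by omega) i)

lemma letter_trunc {n k : ℕ} (w : Fin (n + 3) → Fin k) {i : ℕ} (h : i < n) :
    letter (trunc w) i = letter w i := by
  simp [letter, trunc, h, show i < n + 3 by omega, Fin.castLE_mk]

lemma key {n : ℕ} (w : Fin (n + 3) → Fin 3) :
    (Avoids123 (Fin.init w) ∧ ¬ Avoids123 w) ↔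
      (Avoids123 (trunc w) ∧ w ⟨n, by omega⟩ = 0 ∧ w ⟨n + 1, by omega⟩ = 1 ∧
        w ⟨n + 2, by omega⟩ = 2) := by
  constructor
  · rintro ⟨hinit, hw⟩
    unfold Avoids123 at hw
    push_neg at hw
    obtain ⟨i, hi2, h1, h2⟩ := hw
    have hin : i = n := by
      by_contra hne
      have hi2' : i + 2 < n + 2 := by omega
      exact hinit i hi2' (by
        rw [letter_init w (by omega), letter_init w (by omega), letter_init w (by omega)]
        exact ⟨h1, h2⟩)
    rw [hin] at h1 h2
    have p0 := letter_pos w (show n < n + 3 by omega)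
    have l2 := letter_le w (n + 2)
    have e0 : letter w n = 1 := by omega
    have e1 : letter w (n + 1) = 2 := by omega
    have e2 : letter w (n + 2) = 3 := by omega
    simp only [letter, show n < n + 3 by omega, show n + 1 < n + 3 by omega,
      show n + 2 < n + 3 by omega, dif_pos] at e0 e1 e2
    refine ⟨?_, ?_, ?_, ?_⟩
    · intro i hi
      have hpa := hinit i (show i + 2 < n + 2 by omega)
      rw [letter_init w (by omega), letter_init w (by omega), letter_init w (by omega)] at hpa
      rw [letter_trunc w (by omega), letter_trunc w (by omega), letter_trunc w (by omega)]
      exact hpa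
    · exact Fin.ext (by simp; omega)
    · exact Fin.ext (by simp; omega)
    · exact Fin.ext (by simp; omega)
  · rintro ⟨ht, h0, h1, h2⟩
    have e0 : letter w n = 1 := by simp [letter, show n < n + 3 by omega, h0]
    have e1 : letter w (n + 1) = 2 := by simp [letter, show n + 1 < n + 3 by omega, h1]
    have e2 : letter w (n + 2) = 3 := by simp [letter, show n + 2 < n + 3 by omega, h2]
    constructor
    · intro i hi
      rw [letter_init w (by omega), letter_init w (by omega), letter_init w (by omega)]
      rcases show i + 2 < n ∨ i + 2 = n ∨ i + 2 = n + 1 by omega with h | h | h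
      · rw [← letter_trunc w (by omega), ← letter_trunc w (by omega),
          ← letter_trunc w (by omega)]
        exact ht i (by omega)
      · have := letter_pos w (show i + 1 < n + 3 by omega)
        rw [h]
        omega
      · have hm : letter w (i + 1) = 1 := by rw [show i + 1 = n by omega]; exact e0
        have := letter_pos w (show i < n + 3 by omega)
        omega
    · intro hav
      exact hav n (by omega) (by omega)

/-- extend a word by the letters 1,2,3 -/
def ext3 {n : ℕ} (u : Fin n → Fin 3) : Fin (n + 3) → Fin 3 :=
  fun j => if h : (j : ℕ) < n then u ⟨j, h⟩ else ⟨(j : ℕ) - n, by omega⟩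

lemma ext3_at {n : ℕ} (u : Fin n → Fin 3) (t : ℕ) (h1 : n ≤ t) (h2 : t < n + 3) :
    ext3 u ⟨t, h2⟩ = ⟨t - n, by omega⟩ := by
  unfold ext3
  rw [dif_neg (show ¬ (t < n) by omega)]

lemma trunc_ext3 {n : ℕ} (u : Fin n → Fin 3) : trunc (ext3 u) = u := by
  funext i
  simp [trunc, ext3, i.isLt]

lemma key_ext3 {n : ℕ} (u : Fin n → Fin 3) (h : Avoids123 u) :
    Avoids123 (Fin.init (ext3 u)) ∧ ¬ Avoids123 (ext3 u) := by
  rw [key]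
  refine ⟨by rw [trunc_ext3]; exact h, ?_, ?_, ?_⟩
  · rw [ext3_at u n le_rfl (by omega)]
    exact Fin.ext (by simp)
  · rw [ext3_at u (n + 1) (by omega) (by omega)]
    exact Fin.ext (by simp)
  · rw [ext3_at u (n + 2) (by omega) (by omega)]
    exact Fin.ext (by simp)

lemma card_bad (n : ℕ) :
    Nat.card {w : Fin (n + 3) → Fin 3 // Avoids123 (Fin.init w) ∧ ¬ Avoids123 w} =
      Nat.card {u : Fin n → Fin 3 // Avoids123 u} := by
  apply Nat.card_congr
  refine ⟨fun x => ⟨trunc x.1, ((key x.1).mp x.2).1⟩,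
    fun u => ⟨ext3 u.1, key_ext3 u.1 u.2⟩, ?_, ?_⟩
  · rintro ⟨w, hw⟩
    obtain ⟨-, h0, h1, h2⟩ := (key w).mp hw
    apply Subtype.ext
    funext j
    simp only [ext3]
    by_cases hj : (j : ℕ) < n
    · rw [dif_pos hj]
      exact congrArg w (Fin.ext rfl)
    · rw [dif_neg hj]
      rcases show (j : ℕ) = n ∨ (j : ℕ) = n + 1 ∨ (j : ℕ) = n + 2 by omega with h | h | h
      · have hjv : w j = 0 := by rw [show j = ⟨n, by omega⟩ from Fin.ext h]; exact h0
        rw [hjv]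
        exact Fin.ext (by simp [h])
      · have hjv : w j = 1 := by rw [show j = ⟨n + 1, by omega⟩ from Fin.ext h]; exact h1
        rw [hjv]
        exact Fin.ext (by simp [h])
      · have hjv : w j = 2 := by rw [show j = ⟨n + 2, by omega⟩ from Fin.ext h]; exact h2
        rw [hjv]
        exact Fin.ext (by simp [h])
  · rintro ⟨u, hu⟩
    exact Subtype.ext (trunc_ext3 u)

lemma card_prefix (n : ℕ) :
    Nat.card {w : Fin (n + 3) → Fin 3 // Avoids123 (Fin.init w)} =
      3 * Nat.card {v : Fin (n + 2) → Fin 3 // Avoids123 v} := by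
  have e : {w : Fin (n + 3) → Fin 3 // Avoids123 (Fin.init w)} ≃
      {v : Fin (n + 2) → Fin 3 // Avoids123 v} × Fin 3 :=
    { toFun := fun x => (⟨Fin.init x.1, x.2⟩, x.1 (Fin.last _))
      invFun := fun p => ⟨Fin.snoc p.1.1 p.2, by rw [Fin.init_snoc]; exact p.1.2⟩
      left_inv := fun x => Subtype.ext (Fin.snoc_init_self x.1)
      right_inv := fun p => by
        obtain ⟨⟨v, hv⟩, a⟩ := p
        simp only [Fin.init_snoc, Fin.snoc_last] }
  rw [Nat.card_congr e, Nat.card_prod, Nat.card_eq_fintype_card (α := Fin 3)]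
  simp [mul_comm]

lemma frec (n : ℕ) : f (n + 3) + f n = 3 * f (n + 2) := by
  simp only [f]
  rw [← card_bad n, ← card_prefix n]
  simp only [Nat.card_eq_fintype_card]
  rw [Fintype.card_subtype, Fintype.card_subtype, Fintype.card_subtype]
  have key := Finset.card_filter_add_card_filter_not
    (s := (Finset.univ : Finset (Fin (n + 3) → Fin 3)).filter fun w => Avoids123 (Fin.init w))
    (p := fun w => Avoids123 w)
  rw [Finset.filter_filter, Finset.filter_filter] at key
  rw [← key]
  congr 1
  apply Finset.card_nbij id (fun w hw => by
    simp only [Finset.mem_coe, Finset.mem_filter, Finset.mem_univ, true_and, id] at hw ⊢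
    exact ⟨avoids_init hw, hw⟩)
  · intro a _ b _ h; exact h
  · intro w hw
    simp only [Finset.coe_filter, Set.mem_setOf_eq, Finset.mem_univ, true_and,
      Set.mem_image] at hw ⊢
    exact ⟨w, hw.2, rfl⟩

lemma f_small (n : ℕ) (h : n ≤ 2) : f n = 3 ^ n := by
  have hall : ∀ w : Fin n → Fin 3, Avoids123 w := by
    intro w i hi
    omega
  rw [f, Nat.card_congr (Equiv.subtypeUnivEquiv hall), Nat.card_eq_fintype_card]
  simp

theorem stmt18 :
    f 0 = 1 ∧ f 1 = 3 ∧ f 2 = 9 ∧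
      ∀ n : ℕ, 3 ≤ n → (f n : ℤ) = 3 * (f (n - 1) : ℤ) - (f (n - 3) : ℤ) := by
  refine ⟨f_small 0 (by norm_num), f_small 1 (by norm_num), f_small 2 (by norm_num), ?_⟩
  intro n hn
  obtain ⟨m, rfl⟩ : ∃ m, n = m + 3 := ⟨n - 3, by omega⟩
  have h := frec m
  have h1 : m + 3 - 1 = m + 2 := by omega
  have h3 : m + 3 - 3 = m := by omega
  rw [h1, h3]
  omega
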